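/- For the rectangular Young-diagram state |y(k)⟩ with k < n/2, the two-party reduced state is ρ_2 = (1/(d k (n-1)))[ (n-k) ∑_i |ii⟩⟨ii| + (n(k-1)/(d-1)) ∑_{i≠j} (|ij⟩⟨ij| + |ij⟩⟨ji|) ]. -/

import Mathlib

/-!
The amplitude is constant on rectangular strings, so the matrix entry at `(ij, i'j')` is the
number of tails `r` completing both `(i, j)` and `(i', j')` to rectangular strings, divided by
the number `M` of rectangular strings. As every value occurs `q = n / k ≥ 3` times, a common tail
forces `{i', j'} = {i, j}`, so only the entries `|ij⟩⟨ij|` and `|ij⟩⟨ji|` survive, both equal to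
`N(i, j) / M` where `N(i, j)` counts the completions of `(i, j)`. Permuting values shows that
`N(i, i) = a` and `N(i, j) = b` (for `i ≠ j`) do not depend on `i, j`, whence
`M = d (a + (d - 1) b)`. Permuting positions shows that `f 1 = f 0` holds for a fraction `(q - 1) / (n - 1)` of the
rectangular strings `f`, i.e. `d a (n - 1) = M (q - 1)`. Solving for `a / M` and `b / M` gives
the two coefficients.
-/

open Finset Function

variable {ι ι' α β : Type*}

section IsRectangular

variable [Fintype ι] [DecidableEq α] {k q : ℕ}

def IsRectangular (k q : ℕ) (f : ι → α) : Prop :=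
  #(univ.image f) = k ∧ ∀ v ∈ univ.image f, #{i | f i = v} = q

instance IsRectangular.decidablePred (k q : ℕ) :
    DecidablePred (IsRectangular (ι := ι) (α := α) k q) :=
  fun _ => inferInstanceAs (Decidable (_ ∧ _))

theorem IsRectangular.card_filter_eq_zero_or {f : ι → α} (h : IsRectangular k q f) (v : α) :
    #{i | f i = v} = 0 ∨ #{i | f i = v} = q := by
  by_cases hv : v ∈ univ.image f
  · exact .inr (h.2 v hv)
  · left
    simpa [filter_eq_empty_iff] using hv

theorem IsRectangular.comp_equiv [Fintype ι'] {f : ι → α} (h : IsRectangular k q f)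
    (e : ι' ≃ ι) : IsRectangular k q (f ∘ e) := by
  have himage : univ.image (f ∘ e) = univ.image f := by
    classical rw [← image_image, image_univ_equiv]
  refine ⟨himage ▸ h.1, fun v hv => ?_⟩
  rw [← h.2 v (himage ▸ hv)]
  exact card_equiv e (by simp)

theorem isRectangular_comp_equiv_iff [Fintype ι'] {f : ι → α} (e : ι' ≃ ι) :
    IsRectangular k q (f ∘ e) ↔ IsRectangular k q f :=
  ⟨fun h => by simpa [comp_assoc] using h.comp_equiv e.symm, fun h => h.comp_equiv e⟩

theorem IsRectangular.comp_injective [DecidableEq β] {f : ι → α} (h : IsRectangular k q f)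
    {g : α → β} (hg : Injective g) : IsRectangular k q (g ∘ f) := by
  have himage : univ.image (g ∘ f) = (univ.image f).image g := by rw [image_image]
  refine ⟨by rw [himage, card_image_of_injective _ hg, h.1], fun w hw => ?_⟩
  rw [himage] at hw
  obtain ⟨v, hv, rfl⟩ := mem_image.1 hw
  simpa [hg.eq_iff] using h.2 v hv

theorem isRectangular_equiv_comp_iff [DecidableEq β] {f : ι → α} (σ : α ≃ β) :
    IsRectangular k q (σ ∘ f) ↔ IsRectangular k q f :=
  ⟨fun h => by simpa [← comp_assoc] using h.comp_injective σ.symm.injective,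
    fun h => h.comp_injective σ.injective⟩

theorem isRectangular_fst_finProdFinEquiv_symm (hq : 0 < q) :
    IsRectangular k q (Prod.fst ∘ finProdFinEquiv.symm : Fin (k * q) → Fin k) := by
  have hsurj : Surjective (Prod.fst ∘ finProdFinEquiv.symm : Fin (k * q) → Fin k) :=
    fun a => ⟨finProdFinEquiv (a, ⟨0, hq⟩), by simp⟩
  refine ⟨by simp [image_univ_of_surjective hsurj], fun a _ => ?_⟩
  rw [card_equiv finProdFinEquiv.symm (t := {p | p.1 = a}) (by simp)]
  rw [show ({p | p.1 = a} : Finset (Fin k × Fin q)) = {a} ×ˢ univ by ext ⟨b, c⟩; simp [eq_comm]]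
  simp

theorem exists_isRectangular [Fintype α] (hq : 0 < q) (hkq : k * q = Fintype.card ι)
    (hk : k ≤ Fintype.card α) : ∃ f : ι → α, IsRectangular k q f := by
  let g : Fin k → α := (Fintype.equivFin α).symm ∘ Fin.castLE hk
  have hg : Injective g := (Fintype.equivFin α).symm.injective.comp (Fin.castLE_injective hk)
  refine ⟨g ∘ (Prod.fst ∘ finProdFinEquiv.symm) ∘ Fintype.equivFinOfCardEq hkq.symm, ?_⟩
  exact ((isRectangular_fst_finProdFinEquiv_symm hq).comp_equiv _).comp_injective hg

end IsRectangular

theorem cons_cons_comp_swap_zero_one {m : ℕ} (i j : α) (r : Fin m → α) :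
    (Fin.cons i (Fin.cons j r) : Fin (m + 2) → α) ∘ Equiv.swap 0 1 = Fin.cons j (Fin.cons i r) := by
  funext p
  refine Fin.cases ?_ (Fin.cases ?_ fun p => ?_) p
  · simp
  · simp
  · have h1 : p.succ.succ ≠ 1 := fun h => Fin.succ_ne_zero p (Fin.succ_injective _ h)
    simp [Equiv.swap_apply_of_ne_of_ne (Fin.succ_ne_zero _) h1]

section Cons

variable [DecidableEq α] {m k q : ℕ}

theorem card_filter_cons_eq {n : ℕ} (i : α) (r : Fin n → α) (v : α) :
    #{p | (Fin.cons i r : Fin (n + 1) → α) p = v} = (if i = v then 1 else 0) + #{p | r p = v} := by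
  simpa using Fin.card_filter_univ_succ' fun p => (Fin.cons i r : Fin (n + 1) → α) p = v

theorem eq_and_eq_or_eq_and_eq_of_forall_ite_add_ite {i j i' j' : α}
    (h : ∀ v, (if i = v then 1 else 0) + (if j = v then 1 else 0) =
      (if i' = v then 1 else 0) + (if j' = v then (1 : ℕ) else 0)) :
    i' = i ∧ j' = j ∨ i' = j ∧ j' = i := by
  have hi := h i
  have hj := h j
  split_ifs at hi hj <;> grind

theorem IsRectangular.eq_or_swap_of_cons_cons (hq : 3 ≤ q) {i j i' j' : α} {r : Fin m → α}
    (h : IsRectangular k q (Fin.cons i (Fin.cons j r) : Fin (m + 2) → α))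
    (h' : IsRectangular k q (Fin.cons i' (Fin.cons j' r) : Fin (m + 2) → α)) :
    i' = i ∧ j' = j ∨ i' = j ∧ j' = i := by
  -- Whether `v` occurs at all is decided by `r`, since the first two slots give `v` at most
  -- `2 < q` occurrences; hence both strings give `v` the same number of occurrences there.
  refine eq_and_eq_or_eq_and_eq_of_forall_ite_add_ite fun v => ?_
  have hv := h.card_filter_eq_zero_or v
  have hv' := h'.card_filter_eq_zero_or v
  simp only [card_filter_cons_eq] at hv hv'
  split_ifs at hv hv' ⊢ <;> omega

theorem isRectangular_cons_cons_comm (i j : α) (r : Fin m → α) :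
    IsRectangular k q (Fin.cons i (Fin.cons j r) : Fin (m + 2) → α) ↔
      IsRectangular k q (Fin.cons j (Fin.cons i r) : Fin (m + 2) → α) := by
  rw [← cons_cons_comp_swap_zero_one, isRectangular_comp_equiv_iff]

end Cons

theorem sum_univ_fun_fin_succ [Fintype α] [AddCommMonoid β] {n : ℕ} (g : (Fin (n + 1) → α) → β) :
    ∑ f, g f = ∑ u, ∑ r, g (Fin.cons u r) := by
  rw [← (Fin.consEquiv fun _ => α).sum_comp, Fintype.sum_prod_type]
  rfl

section DoubleCounting

variable [Fintype ι] [DecidableEq ι] [Fintype α] [DecidableEq α] {k q : ℕ}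

theorem card_isRectangular_apply_eq_of_ne {p₀ p₁ p₂ : ι} (h₁ : p₁ ≠ p₀) (h₂ : p₂ ≠ p₀) :
    #{f : ι → α | IsRectangular k q f ∧ f p₁ = f p₀} =
      #{f : ι → α | IsRectangular k q f ∧ f p₂ = f p₀} := by
  refine card_equiv ((Equiv.swap p₁ p₂).symm.arrowCongr (Equiv.refl α)) fun f => ?_
  change _ ↔ f ∘ Equiv.swap p₁ p₂ ∈ _
  simp [isRectangular_comp_equiv_iff, Equiv.swap_apply_of_ne_of_ne h₁.symm h₂.symm]

theorem card_isRectangular_apply_eq_mul {p₀ p₁ : ι} (h : p₁ ≠ p₀) :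
    #{f : ι → α | IsRectangular k q f ∧ f p₁ = f p₀} * (Fintype.card ι - 1) =
      #{f : ι → α | IsRectangular k q f} * (q - 1) := by
  set S : Finset (ι → α) := {f | IsRectangular k q f}
  have hrow : ∀ f ∈ S, #{p ∈ univ.erase p₀ | f p = f p₀} = q - 1 := by
    intro f hf
    rw [filter_erase, card_erase_of_mem (by simp),
      (mem_filter.1 hf).2.2 (f p₀) (mem_image_of_mem f (mem_univ _))]
  have hcol : ∀ p ∈ univ.erase p₀,
      #{f ∈ S | f p = f p₀} = #{f : ι → α | IsRectangular k q f ∧ f p₁ = f p₀} := by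
    intro p hp
    rw [filter_filter, card_isRectangular_apply_eq_of_ne (ne_of_mem_erase hp) h]
  calc _ = ∑ p ∈ univ.erase p₀, #{f ∈ S | f p = f p₀} := by
        rw [sum_congr rfl hcol, sum_const, card_erase_of_mem (mem_univ _), card_univ, smul_eq_mul,
          mul_comm]
    _ = ∑ f ∈ S, #{p ∈ univ.erase p₀ | f p = f p₀} := by
        simp only [card_filter]
        exact sum_comm
    _ = _ := by rw [sum_congr rfl hrow, sum_const, smul_eq_mul]

end DoubleCounting

section PairCount

variable [Fintype α] [DecidableEq α] {m k q : ℕ}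

variable (m k q) in
/-- `M` times the diagonal entry of `ρ₂` at `|uv⟩`, `M` being the number of rectangular strings. -/
def pairCount (u v : α) : ℕ :=
  #{r : Fin m → α | IsRectangular k q (Fin.cons u (Fin.cons v r) : Fin (m + 2) → α)}

theorem pairCount_equiv (σ : α ≃ α) (u v : α) :
    pairCount m k q (σ u) (σ v) = pairCount m k q u v := by
  unfold pairCount
  refine (card_equiv ((Equiv.refl (Fin m)).arrowCongr σ) fun r => ?_).symm
  have hcons : σ ∘ (Fin.cons u (Fin.cons v r) : Fin (m + 2) → α) =
      Fin.cons (σ u) (Fin.cons (σ v) (σ ∘ r)) := by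
    rw [Fin.comp_cons, Fin.comp_cons]
  simp only [mem_filter, mem_univ, true_and]
  rw [← isRectangular_equiv_comp_iff σ, hcons]
  rfl

theorem pairCount_self (u w : α) : pairCount m k q u u = pairCount m k q w w := by
  simpa using (pairCount_equiv (m := m) (k := k) (q := q) (Equiv.swap u w) u u).symm

theorem pairCount_eq_of_ne {u v i j : α} (huv : u ≠ v) (hij : i ≠ j) :
    pairCount m k q u v = pairCount m k q i j := by
  let σ := Equiv.swap u i
  have hσv : σ v ≠ i := fun h => huv (σ.injective (h.trans (Equiv.swap_apply_left u i).symm)).symm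
  let τ := Equiv.swap (σ v) j
  have hτ : τ i = i := Equiv.swap_apply_of_ne_of_ne hσv.symm hij
  have := pairCount_equiv (m := m) (k := k) (q := q) (σ.trans τ) u v
  simpa [σ, τ, hτ] using this.symm

theorem sum_pairCount :
    ∑ u : α, ∑ v : α, pairCount m k q u v = #{f : Fin (m + 2) → α | IsRectangular k q f} := by
  rw [card_filter, sum_univ_fun_fin_succ]
  refine sum_congr rfl fun u _ => ?_
  rw [sum_univ_fun_fin_succ]
  simp only [pairCount, card_filter]

theorem sum_pairCount_self :
    ∑ u : α, pairCount m k q u u = #{f : Fin (m + 2) → α | IsRectangular k q f ∧ f 1 = f 0} := by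
  rw [card_filter, sum_univ_fun_fin_succ]
  refine sum_congr rfl fun u _ => ?_
  rw [sum_univ_fun_fin_succ]
  simp only [Fin.cons_zero, Fin.cons_one, pairCount, card_filter]
  rw [Fintype.sum_eq_single u fun v hv => by simp [hv]]
  simp

theorem card_mul_pairCount_self_mul (u : α) :
    Fintype.card α * pairCount m k q u u * (m + 1) =
      #{f : Fin (m + 2) → α | IsRectangular k q f} * (q - 1) := by
  have hsum : ∑ w : α, pairCount m k q w w = Fintype.card α * pairCount m k q u u := by
    rw [sum_congr rfl fun w _ => pairCount_self w u, sum_const, card_univ, smul_eq_mul]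
  rw [← hsum, sum_pairCount_self,
    ← card_isRectangular_apply_eq_mul (p₀ := (0 : Fin (m + 2))) (p₁ := 1) (by simp),
    Fintype.card_fin]
  rfl

theorem card_isRectangular_eq {i j : α} (hij : i ≠ j) :
    #{f : Fin (m + 2) → α | IsRectangular k q f} =
      Fintype.card α * (pairCount m k q i i + (Fintype.card α - 1) * pairCount m k q i j) := by
  have hrow : ∀ u : α, ∑ v, pairCount m k q u v =
      pairCount m k q i i + (Fintype.card α - 1) * pairCount m k q i j := by
    intro u
    rw [← add_sum_erase _ _ (mem_univ u), pairCount_self u i,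
      sum_congr rfl fun v hv => pairCount_eq_of_ne (ne_of_mem_erase hv).symm hij, sum_const,
      card_erase_of_mem (mem_univ u), card_univ, smul_eq_mul]
  rw [← sum_pairCount, sum_congr rfl fun u _ => hrow u, sum_const, card_univ, smul_eq_mul]

theorem card_filter_isRectangular_cons_cons (hq : 3 ≤ q) (i j i' j' : α) :
    #{r : Fin m → α | IsRectangular k q (Fin.cons i (Fin.cons j r) : Fin (m + 2) → α) ∧
        IsRectangular k q (Fin.cons i' (Fin.cons j' r) : Fin (m + 2) → α)} =
      if i' = i ∧ j' = j ∨ i' = j ∧ j' = i then pairCount m k q i j else 0 := by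
  split_ifs with h
  · rcases h with ⟨rfl, rfl⟩ | ⟨rfl, rfl⟩
    · simp only [and_self, pairCount]
    · simp only [← isRectangular_cons_cons_comm i' j', and_self, pairCount]
  · rw [card_eq_zero, filter_eq_empty_iff]
    rintro r - ⟨hr, hr'⟩
    exact h (hr.eq_or_swap_of_cons_cons hq hr')

end PairCount

theorem sum_mul_conj_of_eq_ite {γ : Type*} [Fintype β] [Fintype γ] (P : β → Prop)
    [DecidablePred P] (ψ : β → ℂ)
    (hψ : ∀ x, ψ x = if P x then ((√(#{x | P x} : ℝ))⁻¹ : ℝ) else 0) (g g' : γ → β) :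
    ∑ r, ψ (g r) * (starRingEnd ℂ) (ψ (g' r)) = #{r | P (g r) ∧ P (g' r)} / #{x | P x} := by
  have hsqrt : ((√(#{x | P x} : ℝ))⁻¹ : ℝ) * (√(#{x | P x} : ℝ))⁻¹ = (#{x | P x} : ℝ)⁻¹ := by
    rw [← mul_inv, Real.mul_self_sqrt (Nat.cast_nonneg _)]
  have hterm : ∀ r, ψ (g r) * (starRingEnd ℂ) (ψ (g' r)) =
      if P (g r) ∧ P (g' r) then (#{x | P x} : ℂ)⁻¹ else 0 := by
    intro r
    rw [hψ, hψ]
    split_ifs with h₁ h₂ h₂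
    · rw [Complex.conj_ofReal, ← Complex.ofReal_mul, hsqrt]
      push_cast
      rfl
    all_goals simp_all
  rw [sum_congr rfl fun r _ => hterm r, sum_ite, sum_const_zero, add_zero, sum_const,
    nsmul_eq_mul, div_eq_mul_inv]

section Ratios

variable [Fintype α] [DecidableEq α] {m k q : ℕ} {K : Type*} [Field K] [CharZero K]

theorem pairCount_self_div_card (hkq : k * q = m + 2)
    (hM : 0 < #{f : Fin (m + 2) → α | IsRectangular k q f}) (u : α) :
    (pairCount m k q u u : K) / #{f : Fin (m + 2) → α | IsRectangular k q f} =
      1 / (Fintype.card α * k * ((m + 2 : ℕ) - 1)) * (((m + 2 : ℕ) : K) - k) := by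
  have hq : 1 ≤ q := Nat.pos_of_ne_zero fun h => by simp [h] at hkq
  have hk : (k : K) ≠ 0 := Nat.cast_ne_zero.2 fun h => by simp [h] at hkq
  have hd : (Fintype.card α : K) ≠ 0 := Nat.cast_ne_zero.2 (Fintype.card_pos_iff.2 ⟨u⟩).ne'
  have hn : ((m + 2 : ℕ) : K) - 1 ≠ 0 := by
    rw [Nat.cast_succ, add_sub_cancel_right]; exact Nat.cast_ne_zero.2 m.succ_ne_zero
  have hM' : (#{f : Fin (m + 2) → α | IsRectangular k q f} : K) ≠ 0 := Nat.cast_ne_zero.2 hM.ne'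
  have hkq' : (k : K) * q = m + 2 := by exact_mod_cast hkq
  have hself : (Fintype.card α : K) * pairCount m k q u u * (m + 1) =
      #{f : Fin (m + 2) → α | IsRectangular k q f} * (q - 1) := by
    simpa [Nat.cast_sub hq] using
      congrArg (Nat.cast : ℕ → K) (card_mul_pairCount_self_mul (m := m) (k := k) (q := q) u)
  field_simp
  push_cast
  linear_combination (k : K) * hself + (#{f : Fin (m + 2) → α | IsRectangular k q f} : K) * hkq'

theorem pairCount_div_card (hkq : k * q = m + 2)
    (hM : 0 < #{f : Fin (m + 2) → α | IsRectangular k q f}) {i j : α} (hij : i ≠ j) :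
    (pairCount m k q i j : K) / #{f : Fin (m + 2) → α | IsRectangular k q f} =
      1 / (Fintype.card α * k * ((m + 2 : ℕ) - 1)) *
        (((m + 2 : ℕ) : K) * (k - 1) / (Fintype.card α - 1)) := by
  have hd1 : 1 < Fintype.card α := Fintype.one_lt_card_iff.2 ⟨i, j, hij⟩
  have hk : (k : K) ≠ 0 := Nat.cast_ne_zero.2 fun h => by simp [h] at hkq
  have hd : (Fintype.card α : K) ≠ 0 := Nat.cast_ne_zero.2 (by omega)
  have hd' : (Fintype.card α : K) - 1 ≠ 0 := by
    rw [sub_ne_zero]; exact_mod_cast hd1.ne'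
  have hn : ((m + 2 : ℕ) : K) - 1 ≠ 0 := by
    rw [Nat.cast_succ, add_sub_cancel_right]; exact Nat.cast_ne_zero.2 m.succ_ne_zero
  have hM' : (#{f : Fin (m + 2) → α | IsRectangular k q f} : K) ≠ 0 := Nat.cast_ne_zero.2 hM.ne'
  have htotal : (#{f : Fin (m + 2) → α | IsRectangular k q f} : K) =
      Fintype.card α * (pairCount m k q i i + (Fintype.card α - 1) * pairCount m k q i j) := by
    simpa [Nat.cast_sub hd1.le] using
      congrArg (Nat.cast : ℕ → K) (card_isRectangular_eq (m := m) (k := k) (q := q) hij)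
  have hsolve : (pairCount m k q i j : K) / #{f : Fin (m + 2) → α | IsRectangular k q f} =
      (1 / Fintype.card α - pairCount m k q i i / #{f : Fin (m + 2) → α | IsRectangular k q f}) /
        (Fintype.card α - 1) := by
    field_simp
    linear_combination -htotal
  rw [hsolve, pairCount_self_div_card hkq hM i]
  field_simp
  ring

end Ratios

theorem rectangular_state_two_party_marginal_general (d k m : ℕ)
    (hdvd : k ∣ (m + 2)) (hkn : 2 * k < m + 2) (hkd : k ≤ d)
    (P : (Fin (m + 2) → Fin d) → Prop) [DecidablePred P]
    (hP : ∀ f, P f ↔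
      (Finset.univ.image f).card = k ∧
      ∀ v ∈ Finset.univ.image f,
        (Finset.univ.filter (fun i => f i = v)).card = (m + 2) / k)
    (ψ : (Fin (m + 2) → Fin d) → ℂ)
    (hψ : ∀ f, ψ f = if P f then
      ((Real.sqrt (((Finset.univ : Finset (Fin (m + 2) → Fin d)).filter
        (fun g => P g)).card))⁻¹ : ℝ) else 0) :
    ∀ i j i' j' : Fin d,
      (∑ r : Fin m → Fin d,
          ψ (Fin.cons i (Fin.cons j r)) *
            (starRingEnd ℂ) (ψ (Fin.cons i' (Fin.cons j' r))))
        = (1 / ((d : ℂ) * k * ((m + 2 : ℕ) - 1)))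
            * ((((m + 2 : ℕ) : ℂ) - k)
                 * (if i = j ∧ i' = i ∧ j' = i then 1 else 0)
               + (((m + 2 : ℕ) : ℂ) * ((k : ℂ) - 1) / ((d : ℂ) - 1))
                 * ((if i ≠ j ∧ i' = i ∧ j' = j then 1 else 0)
                    + (if i ≠ j ∧ i' = j ∧ j' = i then 1 else 0))) := by
  intro i j i' j'
  set q := (m + 2) / k
  have hkq : k * q = m + 2 := Nat.mul_div_cancel' hdvd
  have hq : 3 ≤ q := by nlinarith
  obtain rfl : P = IsRectangular k q := funext fun f => propext (hP f)
  obtain rfl := Subsingleton.elim ‹_› (IsRectangular.decidablePred (ι := Fin (m + 2)) k q)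
  have hM : 0 < #{f : Fin (m + 2) → Fin d | IsRectangular k q f} := by
    obtain ⟨f, hf⟩ := exists_isRectangular (ι := Fin (m + 2)) (α := Fin d) (q := q) (by omega)
      (by simpa using hkq) (by simpa using hkd)
    exact card_pos.2 ⟨f, by simpa using hf⟩
  rw [sum_mul_conj_of_eq_ite _ ψ hψ, card_filter_isRectangular_cons_cons hq]
  rcases eq_or_ne i j with rfl | hij
  · by_cases h : i' = i ∧ j' = i
    · simpa [h] using pairCount_self_div_card (K := ℂ) hkq hM i
    · simp [h]
  · by_cases h : i' = i ∧ j' = j ∨ i' = j ∧ j' = i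
    · rcases h with ⟨rfl, rfl⟩ | ⟨rfl, rfl⟩ <;>
        simpa [hij, hij.symm] using pairCount_div_card (K := ℂ) hkq hM hij
    · simp only [not_or] at h
      simp [h, hij]

/-- For the rectangular Young-diagram state `|y(k)⟩` with `n = m + 2` particles on
`d` sites and `k < n/2`, the two-party reduced density matrix is
`ρ₂ = (1/(d k (n-1)))[(n-k) ∑_i |ii⟩⟨ii| + (n(k-1)/(d-1)) ∑_{i≠j} (|ij⟩⟨ij| + |ij⟩⟨ji|)]`. -/
theorem rectangular_state_two_party_marginal (d k m : ℕ) (hk : 0 < k)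
    (hdvd : k ∣ (m + 2)) (hkn : 2 * k < m + 2) (hkd : k ≤ d)
    (P : (Fin (m + 2) → Fin d) → Prop) [DecidablePred P]
    (hP : ∀ f, P f ↔
      (Finset.univ.image f).card = k ∧
      ∀ v ∈ Finset.univ.image f,
        (Finset.univ.filter (fun i => f i = v)).card = (m + 2) / k)
    (ψ : (Fin (m + 2) → Fin d) → ℂ)
    (hψ : ∀ f, ψ f = if P f then
      ((Real.sqrt (((Finset.univ : Finset (Fin (m + 2) → Fin d)).filter
        (fun g => P g)).card))⁻¹ : ℝ) else 0) :
    ∀ i j i' j' : Fin d,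
      (∑ r : Fin m → Fin d,
          ψ (Fin.cons i (Fin.cons j r)) *
            (starRingEnd ℂ) (ψ (Fin.cons i' (Fin.cons j' r))))
        = (1 / ((d : ℂ) * k * ((m + 2 : ℕ) - 1)))
            * ((((m + 2 : ℕ) : ℂ) - k)
                 * (if i = j ∧ i' = i ∧ j' = i then 1 else 0)
               + (((m + 2 : ℕ) : ℂ) * ((k : ℂ) - 1) / ((d : ℂ) - 1))
                 * ((if i ≠ j ∧ i' = i ∧ j' = j then 1 else 0)
                    + (if i ≠ j ∧ i' = j ∧ j' = i then 1 else 0))) :=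
  rectangular_state_two_party_marginal_general d k m hdvd hkn hkd P hP ψ hψ
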